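/- arXiv:1811.03396 — 4 statements merged into one kernel-verified Lean document; each statement's English description precedes it below -/
import Mathlib

section
/- For all integers p, q ≥ 1, every biclique of the grid graph G_{p,q} has at most 4 edges. -/
/-- The grid graph `G_{p,q}` with vertex set `{1,…,q} × {1,…,p}` (modelled as
`Fin q × Fin p`), where two vertices are adjacent iff their coordinates differ
by a total of 1. -/
def gridGraph (p q : ℕ) : SimpleGraph (Fin q × Fin p) where
  Adj v w := Nat.dist (v.1 : ℕ) (w.1 : ℕ) + Nat.dist (v.2 : ℕ) (w.2 : ℕ) = 1
  symm := by
    constructor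
    intro v w h
    rwa [Nat.dist_comm ((w.1 : ℕ)), Nat.dist_comm ((w.2 : ℕ))]
  loopless := by
    constructor
    intro v h
    simp [Nat.dist_self] at h

/-- `H` is a biclique of `G`: a subgraph of `G` that is a complete bipartite
graph with parts `A` and `B`. -/
def IsBiclique {V : Type*} (G H : SimpleGraph V) : Prop :=
  H ≤ G ∧ ∃ A B : Set V, ∀ v w, H.Adj v w ↔ (v ∈ A ∧ w ∈ B) ∨ (v ∈ B ∧ w ∈ A)

/-- The biclique covering number of `G`: the least `n` such that `n` bicliques
of `G` cover all edges of `G`. -/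
noncomputable def bcn {V : Type*} (G : SimpleGraph V) : ℕ :=
  sInf {n | ∃ H : Fin n → SimpleGraph V,
    (∀ i, IsBiclique G (H i)) ∧ ∀ e ∈ G.edgeSet, ∃ i, e ∈ (H i).edgeSet}

/-!
Embed the grid in `ℤ × ℤ`, where adjacency becomes a difference in the set `U` of the four unit
steps. A vertex then has at most `|U| = 4` neighbours, and two distinct vertices `u, v` have at
most 2 common neighbours, since a common neighbour `w` is determined by `w - u = e ∈ U` with
`e - (v - u) ∈ U`, which a finite check shows has at most two solutions. In a biclique with parts
`A` and `B`, either one part has at most one vertex, whose neighbourhood contains the other part,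
or both parts have at least two vertices, whose common neighbourhoods contain the other part;
in either case `|A| * |B| ≤ 4`.
-/

open SimpleGraph

def unitSteps : Finset (ℤ × ℤ) := {(1, 0), (-1, 0), (0, 1), (0, -1)}

lemma card_filter_sub_mem_unitSteps_le_two {d : ℤ × ℤ} (hd : d ≠ 0) :
    (unitSteps.filter fun e => e - d ∈ unitSteps).card ≤ 2 := by
  obtain h | ⟨e, he⟩ := (unitSteps.filter fun e => e - d ∈ unitSteps).eq_empty_or_nonempty
  · simp [h]
  rw [Finset.mem_filter] at he
  obtain ⟨e', he', rfl⟩ : ∃ e' ∈ unitSteps, d = e - e' := ⟨e - d, he.2, by abel⟩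
  have h_check : ∀ e₁ ∈ unitSteps, ∀ e₂ ∈ unitSteps, e₁ - e₂ ≠ 0 →
      (unitSteps.filter fun e => e - (e₁ - e₂) ∈ unitSteps).card ≤ 2 := by
    decide
  exact h_check e he.1 e' he' hd

section LatticeEmbedding

variable {V α : Type*} [AddCommGroup α] {G : SimpleGraph V} {f : V → α} {S : Finset α}

lemma ncard_neighborSet_le_of_adj_sub_mem (hf : Function.Injective f)
    (hS : ∀ v w, G.Adj v w → f w - f v ∈ S) (v : V) :
    (G.neighborSet v).ncard ≤ S.card := by
  rw [← Set.ncard_coe_finset]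
  refine Set.ncard_le_ncard_of_injOn (fun w => f w - f v) (fun w hw => hS v w hw) ?_
  intro w _ w' _ h
  exact hf (sub_left_injective h)

lemma ncard_commonNeighbors_le_of_adj_sub_mem [DecidableEq α] (hf : Function.Injective f)
    (hS : ∀ v w, G.Adj v w → f w - f v ∈ S) (u v : V) :
    (G.commonNeighbors u v).ncard ≤ (S.filter fun e => e - (f v - f u) ∈ S).card := by
  rw [← Set.ncard_coe_finset]
  refine Set.ncard_le_ncard_of_injOn (fun w => f w - f u) (fun w hw => ?_) ?_
  · simpa using ⟨hS u w hw.1, hS v w hw.2⟩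
  · intro w _ w' _ h
    exact hf (sub_left_injective h)

end LatticeEmbedding

def gridCoords {p q : ℕ} (v : Fin q × Fin p) : ℤ × ℤ := ((v.1 : ℤ), (v.2 : ℤ))

lemma gridCoords_injective (p q : ℕ) : Function.Injective (gridCoords (p := p) (q := q)) := by
  intro v w h
  simp only [gridCoords, Prod.mk.injEq, Nat.cast_inj, Fin.val_inj] at h
  exact Prod.ext h.1 h.2

lemma gridGraph_adj_sub_mem_unitSteps {p q : ℕ} (v w : Fin q × Fin p)
    (h : (gridGraph p q).Adj v w) : gridCoords w - gridCoords v ∈ unitSteps := by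
  simp only [gridGraph, Nat.dist] at h
  simp only [unitSteps, gridCoords, Finset.mem_insert, Finset.mem_singleton, Prod.mk_sub_mk,
    Prod.mk.injEq]
  omega

lemma ncard_neighborSet_gridGraph_le {p q : ℕ} (v : Fin q × Fin p) :
    ((gridGraph p q).neighborSet v).ncard ≤ 4 :=
  ncard_neighborSet_le_of_adj_sub_mem (gridCoords_injective p q)
    gridGraph_adj_sub_mem_unitSteps v

lemma ncard_commonNeighbors_gridGraph_le {p q : ℕ} {u v : Fin q × Fin p} (huv : u ≠ v) :
    ((gridGraph p q).commonNeighbors u v).ncard ≤ 2 :=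
  (ncard_commonNeighbors_le_of_adj_sub_mem (gridCoords_injective p q)
    gridGraph_adj_sub_mem_unitSteps u v).trans
    (card_filter_sub_mem_unitSteps_le_two
      (sub_ne_zero.mpr fun h => huv ((gridCoords_injective p q) h).symm))

section Biclique

variable {V : Type*} {G H : SimpleGraph V} {A B : Set V}

lemma ncard_edgeSet_le_ncard_mul_ncard [Finite V]
    (hAB : ∀ v w, H.Adj v w ↔ (v ∈ A ∧ w ∈ B) ∨ (v ∈ B ∧ w ∈ A)) :
    H.edgeSet.ncard ≤ A.ncard * B.ncard := by
  have h_sub : H.edgeSet ⊆ Function.uncurry Sym2.mk '' (A ×ˢ B) := by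
    intro e he
    induction e with
    | h v w =>
      rcases (hAB v w).mp he with ⟨hv, hw⟩ | ⟨hv, hw⟩
      · exact ⟨(v, w), ⟨hv, hw⟩, rfl⟩
      · exact ⟨(w, v), ⟨hw, hv⟩, Sym2.eq_swap⟩
  calc H.edgeSet.ncard ≤ (Function.uncurry Sym2.mk '' (A ×ˢ B)).ncard := Set.ncard_le_ncard h_sub
    _ ≤ (A ×ˢ B).ncard := Set.ncard_image_le (Set.toFinite _)
    _ = A.ncard * B.ncard := Set.ncard_prod

variable [Finite V] {d c : ℕ}

lemma ncard_le_of_nonempty_of_forall_adj (hdeg : ∀ v, (G.neighborSet v).ncard ≤ d)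
    (hAB : ∀ a ∈ A, ∀ b ∈ B, G.Adj a b) (hB : B.Nonempty) : A.ncard ≤ d := by
  obtain ⟨b, hb⟩ := hB
  exact (Set.ncard_le_ncard fun a ha => (hAB a ha b hb).symm).trans (hdeg b)

lemma ncard_le_of_one_lt_ncard_of_forall_adj
    (hcommon : ∀ u v, u ≠ v → (G.commonNeighbors u v).ncard ≤ c)
    (hAB : ∀ a ∈ A, ∀ b ∈ B, G.Adj a b) (hB : 1 < B.ncard) : A.ncard ≤ c := by
  obtain ⟨b₁, hb₁, b₂, hb₂, hne⟩ := (Set.one_lt_ncard (Set.toFinite B)).mp hB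
  refine (Set.ncard_le_ncard fun a ha => ?_).trans (hcommon b₁ b₂ hne)
  exact ⟨(hAB a ha b₁ hb₁).symm, (hAB a ha b₂ hb₂).symm⟩

lemma ncard_mul_ncard_le_of_ncard_le_one (hdeg : ∀ v, (G.neighborSet v).ncard ≤ d)
    (hBA : ∀ b ∈ B, ∀ a ∈ A, G.Adj b a) (hA : A.ncard ≤ 1) : A.ncard * B.ncard ≤ d := by
  obtain rfl | hA_ne := A.eq_empty_or_nonempty
  · simp
  calc A.ncard * B.ncard ≤ 1 * B.ncard := Nat.mul_le_mul_right _ hA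
    _ ≤ d := by rw [one_mul]; exact ncard_le_of_nonempty_of_forall_adj hdeg hBA hA_ne

lemma ncard_mul_ncard_le_of_forall_adj (hdeg : ∀ v, (G.neighborSet v).ncard ≤ d)
    (hcommon : ∀ u v, u ≠ v → (G.commonNeighbors u v).ncard ≤ c)
    (hAB : ∀ a ∈ A, ∀ b ∈ B, G.Adj a b) : A.ncard * B.ncard ≤ max d (c * c) := by
  have hBA : ∀ b ∈ B, ∀ a ∈ A, G.Adj b a := fun b hb a ha => (hAB a ha b hb).symm
  rcases le_or_gt A.ncard 1 with hA | hA
  · exact (ncard_mul_ncard_le_of_ncard_le_one hdeg hBA hA).trans (le_max_left _ _)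
  rcases le_or_gt B.ncard 1 with hB | hB
  · rw [mul_comm]
    exact (ncard_mul_ncard_le_of_ncard_le_one hdeg hAB hB).trans (le_max_left _ _)
  calc A.ncard * B.ncard ≤ c * c :=
        Nat.mul_le_mul (ncard_le_of_one_lt_ncard_of_forall_adj hcommon hAB hB)
          (ncard_le_of_one_lt_ncard_of_forall_adj hcommon hBA hA)
    _ ≤ max d (c * c) := le_max_right _ _

theorem IsBiclique.ncard_edgeSet_le (hH : IsBiclique G H)
    (hdeg : ∀ v, (G.neighborSet v).ncard ≤ d)
    (hcommon : ∀ u v, u ≠ v → (G.commonNeighbors u v).ncard ≤ c) :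
    H.edgeSet.ncard ≤ max d (c * c) := by
  obtain ⟨hHG, A, B, hAB⟩ := hH
  have h_adj : ∀ a ∈ A, ∀ b ∈ B, G.Adj a b := fun a ha b hb =>
    hHG ((hAB a b).mpr (Or.inl ⟨ha, hb⟩))
  exact (ncard_edgeSet_le_ncard_mul_ncard hAB).trans
    (ncard_mul_ncard_le_of_forall_adj hdeg hcommon h_adj)

end Biclique

theorem grid_biclique_card_le_four_general (p q : ℕ)
    (H : SimpleGraph (Fin q × Fin p)) (hH : IsBiclique (gridGraph p q) H) :
    H.edgeSet.ncard ≤ 4 :=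
  hH.ncard_edgeSet_le (d := 4) (c := 2) ncard_neighborSet_gridGraph_le
    fun _ _ => ncard_commonNeighbors_gridGraph_le

theorem grid_biclique_card_le_four (p q : ℕ) (hp : 1 ≤ p) (hq : 1 ≤ q)
    (H : SimpleGraph (Fin q × Fin p)) (hH : IsBiclique (gridGraph p q) H) :
    H.edgeSet.ncard ≤ 4 :=
  grid_biclique_card_le_four_general p q H hH
end

section
/- For all integers p, q ≥ 1, every biclique of the grid graph G_{p,q} that has at least one edge is either a subgraph of the star consisting of some vertex v together with all of its neighbors and the edges from v to them, or a subgraph of a 4-cycle of G_{p,q}. -/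
namespace SimpleGraph

variable {V : Type*}

/-- Unlike `SimpleGraph.IsCompleteBetween`, this also says that `H` has no other edges. -/
def IsCompleteBipartiteWith (H : SimpleGraph V) (A B : Set V) : Prop :=
  ∀ v w, H.Adj v w ↔ (v ∈ A ∧ w ∈ B) ∨ (v ∈ B ∧ w ∈ A)

namespace IsCompleteBipartiteWith

variable {H : SimpleGraph V} {A B : Set V}

theorem symm (h : H.IsCompleteBipartiteWith A B) : H.IsCompleteBipartiteWith B A :=
  fun v w => (h v w).trans or_comm

theorem adj (h : H.IsCompleteBipartiteWith A B) {x y : V} (hx : x ∈ A) (hy : y ∈ B) : H.Adj x y :=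
  (h x y).2 (Or.inl ⟨hx, hy⟩)

theorem exists_eq_of_mem_edgeSet (h : H.IsCompleteBipartiteWith A B) {e : Sym2 V}
    (he : e ∈ H.edgeSet) : ∃ x ∈ A, ∃ y ∈ B, e = s(x, y) := by
  induction e using Sym2.ind with
  | _ v w =>
    rcases (h v w).1 he with ⟨hv, hw⟩ | ⟨hv, hw⟩
    · exact ⟨v, hv, w, hw, rfl⟩
    · exact ⟨w, hw, v, hv, Sym2.eq_swap⟩

theorem mem_of_mem_edgeSet (h : H.IsCompleteBipartiteWith A B) {a : V} (hA : ∀ x ∈ A, x = a)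
    {e : Sym2 V} (he : e ∈ H.edgeSet) : a ∈ e := by
  obtain ⟨x, hx, y, -, rfl⟩ := h.exists_eq_of_mem_edgeSet he
  rw [hA x hx]
  exact Sym2.mem_mk_left a y

end IsCompleteBipartiteWith

end SimpleGraph

/-- `hG` says that two distinct vertices of `G` have at most two common neighbours. -/
theorem IsBiclique.star_or_square {V : Type*} {G H : SimpleGraph V}
    (hG : ∀ ⦃b b' a a' x : V⦄, b ≠ b' → a ≠ a' → a ∈ G.commonNeighbors b b' →
      a' ∈ G.commonNeighbors b b' → x ∈ G.commonNeighbors b b' → x = a ∨ x = a')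
    (hH : IsBiclique G H) (hne : H.edgeSet.Nonempty) :
    (∃ v, ∀ e ∈ H.edgeSet, v ∈ e) ∨
    (∃ a b c d, a ≠ c ∧ b ≠ d ∧ G.Adj a b ∧ G.Adj b c ∧ G.Adj c d ∧ G.Adj d a ∧
      ∀ e ∈ H.edgeSet, e = s(a, b) ∨ e = s(b, c) ∨ e = s(c, d) ∨ e = s(d, a)) := by
  obtain ⟨hle, A, B, hAB⟩ := hH
  have hAB : H.IsCompleteBipartiteWith A B := hAB
  obtain ⟨e, he⟩ := hne
  obtain ⟨a, ha, b, hb, -⟩ := hAB.exists_eq_of_mem_edgeSet he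
  by_cases hA : ∀ x ∈ A, x = a
  · exact .inl ⟨a, fun e he => hAB.mem_of_mem_edgeSet hA he⟩
  by_cases hB : ∀ y ∈ B, y = b
  · exact .inl ⟨b, fun e he => hAB.symm.mem_of_mem_edgeSet hB he⟩
  push Not at hA hB
  obtain ⟨a', ha', haa'⟩ := hA
  obtain ⟨b', hb', hbb'⟩ := hB
  have adj {x y} (hx : x ∈ A) (hy : y ∈ B) : G.Adj x y := hle (hAB.adj hx hy)
  have memA {x y y'} (hx : x ∈ A) (hy : y ∈ B) (hy' : y' ∈ B) :
      x ∈ G.commonNeighbors y y' :=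
    (G.mem_commonNeighbors).2 ⟨(adj hx hy).symm, (adj hx hy').symm⟩
  have memB {y x x'} (hy : y ∈ B) (hx : x ∈ A) (hx' : x' ∈ A) :
      y ∈ G.commonNeighbors x x' :=
    (G.mem_commonNeighbors).2 ⟨adj hx hy, adj hx' hy⟩
  have hA_pair {x} (hx : x ∈ A) : x = a ∨ x = a' :=
    hG hbb'.symm haa'.symm (memA ha hb hb') (memA ha' hb hb') (memA hx hb hb')
  have hB_pair {y} (hy : y ∈ B) : y = b ∨ y = b' :=
    hG haa'.symm hbb'.symm (memB hb ha ha') (memB hb' ha ha') (memB hy ha ha')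
  refine .inr ⟨a, b, a', b', haa'.symm, hbb'.symm, adj ha hb, (adj ha' hb).symm, adj ha' hb',
    (adj ha hb').symm, fun e he => ?_⟩
  obtain ⟨x, hx, y, hy, rfl⟩ := hAB.exists_eq_of_mem_edgeSet he
  rcases hA_pair hx with rfl | rfl <;> rcases hB_pair hy with rfl | rfl <;> simp [Sym2.eq_swap]

section Grid

open SimpleGraph

variable {p q : ℕ} {b b' x y : Fin q × Fin p}

theorem gridGraph_corner_or_midpoint_of_mem_commonNeighbors (hb : b ≠ b')
    (hx : x ∈ (gridGraph p q).commonNeighbors b b') :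
    x = (b.1, b'.2) ∨ x = (b'.1, b.2) ∨
      (2 * (x.1 : ℕ) = b.1 + b'.1 ∧ 2 * (x.2 : ℕ) = b.2 + b'.2) := by
  simp only [mem_commonNeighbors, gridGraph, Nat.dist, ne_eq, Prod.ext_iff, Fin.ext_iff] at *
  omega

theorem gridGraph_eq_corners_of_mem_commonNeighbors (hb : b ≠ b') (hxy : x ≠ y)
    (hx : x ∈ (gridGraph p q).commonNeighbors b b')
    (hy : y ∈ (gridGraph p q).commonNeighbors b b') :
    x = (b.1, b'.2) ∧ y = (b'.1, b.2) ∨ x = (b'.1, b.2) ∧ y = (b.1, b'.2) := by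
  -- A midpoint is a common neighbour only when `b`, `b'` are collinear, and then the only one.
  rcases gridGraph_corner_or_midpoint_of_mem_commonNeighbors hb hx with hx' | hx' | hx' <;>
    rcases gridGraph_corner_or_midpoint_of_mem_commonNeighbors hb hy with hy' | hy' | hy' <;>
    simp only [mem_commonNeighbors, gridGraph, Nat.dist, ne_eq, Prod.ext_iff, Fin.ext_iff] at * <;>
    omega

theorem gridGraph_eq_or_eq_of_mem_commonNeighbors {a a' : Fin q × Fin p}
    (hb : b ≠ b') (ha : a ≠ a') (ha₁ : a ∈ (gridGraph p q).commonNeighbors b b')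
    (ha₂ : a' ∈ (gridGraph p q).commonNeighbors b b')
    (hx : x ∈ (gridGraph p q).commonNeighbors b b') : x = a ∨ x = a' := by
  by_contra! hxa
  rcases gridGraph_eq_corners_of_mem_commonNeighbors hb ha ha₁ ha₂ with ⟨rfl, rfl⟩ | ⟨rfl, rfl⟩ <;>
    rcases gridGraph_eq_corners_of_mem_commonNeighbors hb hxa.1 hx ha₁ with ⟨rfl, -⟩ | ⟨rfl, -⟩ <;>
    simp at hxa

end Grid

theorem grid_biclique_star_or_square_general (p q : ℕ)
    (H : SimpleGraph (Fin q × Fin p)) (hH : IsBiclique (gridGraph p q) H)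
    (hne : H.edgeSet.Nonempty) :
    (∃ v : Fin q × Fin p, ∀ e ∈ H.edgeSet, v ∈ e) ∨
    (∃ a b c d : Fin q × Fin p, a ≠ c ∧ b ≠ d ∧
      (gridGraph p q).Adj a b ∧ (gridGraph p q).Adj b c ∧
      (gridGraph p q).Adj c d ∧ (gridGraph p q).Adj d a ∧
      ∀ e ∈ H.edgeSet, e = s(a, b) ∨ e = s(b, c) ∨ e = s(c, d) ∨ e = s(d, a)) :=
  hH.star_or_square (fun _ _ _ _ _ => gridGraph_eq_or_eq_of_mem_commonNeighbors) hne

theorem grid_biclique_star_or_square (p q : ℕ) (hp : 1 ≤ p) (hq : 1 ≤ q)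
    (H : SimpleGraph (Fin q × Fin p)) (hH : IsBiclique (gridGraph p q) H)
    (hne : H.edgeSet.Nonempty) :
    (∃ v : Fin q × Fin p, ∀ e ∈ H.edgeSet, v ∈ e) ∨
    (∃ a b c d : Fin q × Fin p, a ≠ c ∧ b ≠ d ∧
      (gridGraph p q).Adj a b ∧ (gridGraph p q).Adj b c ∧
      (gridGraph p q).Adj c d ∧ (gridGraph p q).Adj d a ∧
      ∀ e ∈ H.edgeSet, e = s(a, b) ∨ e = s(b, c) ∨ e = s(c, d) ∨ e = s(d, a)) :=
  grid_biclique_star_or_square_general p q H hH hne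
end

section
/- Let p, q be integers with 2 ≤ p ≤ q, and let C be a finite collection of bicliques of the grid graph G_{p,q} whose edge sets cover all edges of G_{p,q}. Then there exists a collection C' of bicliques of G_{p,q} covering all edges of G_{p,q} with |C'| ≤ |C| such that: (i) any two stars in C' that each contain an edge of the outer cycle are edge-disjoint, and (ii) no edge of G_{p,q} is contained both in a 4-cycle of C' containing an edge of the outer cycle and in a star of C' containing an edge of the outer cycle. -/
/-- A vertex of `G_{p,q}` lying on the outer boundary. -/
def OnBoundary (p q : ℕ) (v : Fin q × Fin p) : Prop :=
  (v.1 : ℕ) = 0 ∨ (v.1 : ℕ) = q - 1 ∨ (v.2 : ℕ) = 0 ∨ (v.2 : ℕ) = p - 1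

/-- An edge of the outer cycle of `G_{p,q}`: an edge of the grid both of whose
endpoints lie on the boundary. -/
def OuterEdge (p q : ℕ) (e : Sym2 (Fin q × Fin p)) : Prop :=
  e ∈ (gridGraph p q).edgeSet ∧ ∀ v ∈ e, OnBoundary p q v

/-- A star: a graph with at least one edge, all of whose edges share a common
vertex (the centre); such a biclique is isomorphic to some `K_{1,n}`, `n ≥ 1`. -/
def IsStar {V : Type*} (H : SimpleGraph V) : Prop :=
  H.edgeSet.Nonempty ∧ ∃ v, ∀ e ∈ H.edgeSet, v ∈ e

/-- A 4-cycle: a graph whose edge set consists precisely of the four edges of a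
cycle on four distinct vertices; such a biclique is isomorphic to `K_{2,2}`. -/
def IsC4 {V : Type*} (H : SimpleGraph V) : Prop :=
  ∃ a b c d : V, a ≠ c ∧ b ≠ d ∧
    H.edgeSet = {s(a, b), s(b, c), s(c, d), s(d, a)}

/-!
Fix, for every edge lying in some star of `C` with an outer edge, one such star. Trim each star
of `C` with an outer edge down to the edges that were assigned to it and lie in no 4-cycle of `C`
with an outer edge. A subgraph of a star is still a biclique, so the cover does not grow; a
removed edge stays covered by that 4-cycle or by the star it was assigned to; and after trimming
each edge lies in at most one such star, and in none if it lies in such a 4-cycle.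
-/

variable {V : Type*}

theorem IsC4.not_exists_forall_mem {H : SimpleGraph V} (hH : IsC4 H) :
    ¬ ∃ v, ∀ e ∈ H.edgeSet, v ∈ e := by
  obtain ⟨a, b, c, d, hac, hbd, hset⟩ := hH
  rintro ⟨v, hv⟩
  have hab : s(a, b) ∈ H.edgeSet := by rw [hset]; simp
  have hcd : s(c, d) ∈ H.edgeSet := by rw [hset]; simp
  have hda : s(d, a) ∈ H.edgeSet := by rw [hset]; simp
  have hda_ne : d ≠ a := (H.mem_edgeSet.mp hda).ne
  have hv_ab := Sym2.mem_iff.mp (hv _ hab)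
  have hv_cd := Sym2.mem_iff.mp (hv _ hcd)
  have hv_da := Sym2.mem_iff.mp (hv _ hda)
  grind

theorem IsC4.not_isStar {H : SimpleGraph V} (hH : IsC4 H) : ¬ IsStar H :=
  fun hs => hH.not_exists_forall_mem hs.2

theorem isBiclique_of_forall_mem {G H : SimpleGraph V} (hHG : H ≤ G) (v : V)
    (hv : ∀ e ∈ H.edgeSet, v ∈ e) : IsBiclique G H := by
  refine ⟨hHG, {v}, H.neighborSet v, fun x y => ⟨fun hxy => ?_, ?_⟩⟩
  · rcases Sym2.mem_iff.mp (hv _ (H.mem_edgeSet.mpr hxy)) with rfl | rfl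
    · exact Or.inl ⟨rfl, hxy⟩
    · exact Or.inr ⟨hxy.symm, rfl⟩
  · rintro (⟨rfl, hy⟩ | ⟨hx, rfl⟩)
    · exact hy
    · exact hx.symm

section Normalize

-- `P` marks the edges of the outer cycle; `C` is the cover being normalized.
variable (P : Sym2 V → Prop) (C : Finset (SimpleGraph V))

def HasMarkedEdge (H : SimpleGraph V) : Prop :=
  ∃ e ∈ H.edgeSet, P e

def IsMarkedStar (H : SimpleGraph V) : Prop :=
  IsStar H ∧ HasMarkedEdge P H

def InMarkedC4 (e : Sym2 V) : Prop :=
  ∃ H ∈ C, IsC4 H ∧ HasMarkedEdge P H ∧ e ∈ H.edgeSet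

open Classical in
noncomputable def chosenStar (e : Sym2 V) : SimpleGraph V :=
  if h : ∃ S ∈ C, IsMarkedStar P S ∧ e ∈ S.edgeSet then h.choose else ⊥

noncomputable def trimStar (S : SimpleGraph V) : SimpleGraph V :=
  S.deleteEdges {e | InMarkedC4 P C e ∨ chosenStar P C e ≠ S}

open Classical in
noncomputable def normalizeBiclique (H : SimpleGraph V) : SimpleGraph V :=
  if IsMarkedStar P H then trimStar P C H else H

open Classical in
noncomputable def normalizeCover : Finset (SimpleGraph V) :=
  C.image (normalizeBiclique P C)

variable {P C}

theorem mem_normalizeCover {H' : SimpleGraph V} :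
    H' ∈ normalizeCover P C ↔ ∃ H ∈ C, normalizeBiclique P C H = H' := by
  classical
  exact Finset.mem_image

theorem chosenStar_spec {e : Sym2 V} (h : ∃ S ∈ C, IsMarkedStar P S ∧ e ∈ S.edgeSet) :
    chosenStar P C e ∈ C ∧ IsMarkedStar P (chosenStar P C e) ∧
      e ∈ (chosenStar P C e).edgeSet := by
  rw [chosenStar, dif_pos h]
  exact h.choose_spec

theorem mem_edgeSet_trimStar {S : SimpleGraph V} {e : Sym2 V} :
    e ∈ (trimStar P C S).edgeSet ↔
      e ∈ S.edgeSet ∧ ¬ InMarkedC4 P C e ∧ chosenStar P C e = S := by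
  simp [trimStar, SimpleGraph.edgeSet_deleteEdges]

theorem trimStar_le (S : SimpleGraph V) : trimStar P C S ≤ S :=
  S.deleteEdges_le _

theorem normalizeBiclique_le (H : SimpleGraph V) : normalizeBiclique P C H ≤ H := by
  unfold normalizeBiclique
  split_ifs
  · exact trimStar_le H
  · exact le_rfl

theorem normalizeBiclique_of_not_isMarkedStar {H : SimpleGraph V} (hH : ¬ IsMarkedStar P H) :
    normalizeBiclique P C H = H :=
  if_neg hH

theorem normalizeBiclique_of_isC4 {H : SimpleGraph V} (hH : IsC4 H) :
    normalizeBiclique P C H = H :=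
  normalizeBiclique_of_not_isMarkedStar fun hs => hH.not_isStar hs.1

theorem IsMarkedStar.exists_forall_mem_normalizeBiclique {H : SimpleGraph V}
    (hH : IsMarkedStar P H) : ∃ v, ∀ e ∈ (normalizeBiclique P C H).edgeSet, v ∈ e := by
  obtain ⟨-, v, hv⟩ := hH.1
  exact ⟨v, fun e he =>
    hv e (SimpleGraph.edgeSet_subset_edgeSet.mpr (normalizeBiclique_le H) he)⟩

theorem normalizeBiclique_eq_self_of_isC4 {H : SimpleGraph V}
    (hH : IsC4 (normalizeBiclique P C H)) : normalizeBiclique P C H = H := by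
  by_cases hs : IsMarkedStar P H
  · exact absurd hs.exists_forall_mem_normalizeBiclique hH.not_exists_forall_mem
  · exact normalizeBiclique_of_not_isMarkedStar hs

theorem isBiclique_normalizeBiclique {G H : SimpleGraph V} (hH : IsBiclique G H) :
    IsBiclique G (normalizeBiclique P C H) := by
  by_cases hs : IsMarkedStar P H
  · obtain ⟨v, hv⟩ := hs.exists_forall_mem_normalizeBiclique (C := C)
    exact isBiclique_of_forall_mem ((normalizeBiclique_le H).trans hH.1) v hv
  · rwa [normalizeBiclique_of_not_isMarkedStar hs]

theorem exists_mem_normalizeCover {H : SimpleGraph V} {e : Sym2 V} (hH : H ∈ C)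
    (he : e ∈ H.edgeSet) : ∃ H' ∈ normalizeCover P C, e ∈ H'.edgeSet := by
  by_cases hs : IsMarkedStar P H
  · by_cases hc : InMarkedC4 P C e
    · obtain ⟨H', hH', hc4, -, heH'⟩ := hc
      exact ⟨H', mem_normalizeCover.mpr ⟨H', hH', normalizeBiclique_of_isC4 hc4⟩, heH'⟩
    · obtain ⟨hSC, hS, heS⟩ := chosenStar_spec ⟨H, hH, hs, he⟩
      refine ⟨_, mem_normalizeCover.mpr ⟨_, hSC, rfl⟩, ?_⟩
      rw [normalizeBiclique, if_pos hS]
      exact mem_edgeSet_trimStar.mpr ⟨heS, hc, rfl⟩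
  · exact ⟨H, mem_normalizeCover.mpr ⟨H, hH, normalizeBiclique_of_not_isMarkedStar hs⟩, he⟩

theorem card_normalizeCover_le : (normalizeCover P C).card ≤ C.card := by
  classical
  exact Finset.card_image_le

theorem normalizeBiclique_eq_trimStar {H : SimpleGraph V}
    (hH : IsMarkedStar P (normalizeBiclique P C H)) : normalizeBiclique P C H = trimStar P C H := by
  by_cases hs : IsMarkedStar P H
  · exact if_pos hs
  · rw [normalizeBiclique_of_not_isMarkedStar hs] at hH
    exact absurd hH hs

theorem disjoint_trimStar {S₁ S₂ : SimpleGraph V}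
    (hS : trimStar P C S₁ ≠ trimStar P C S₂) :
    Disjoint (trimStar P C S₁).edgeSet (trimStar P C S₂).edgeSet := by
  refine Set.disjoint_left.mpr fun e he₁ he₂ => hS ?_
  rw [← (mem_edgeSet_trimStar.mp he₁).2.2, ← (mem_edgeSet_trimStar.mp he₂).2.2]

theorem disjoint_trimStar_of_isC4 {H : SimpleGraph V} (hH : H ∈ C) (hc4 : IsC4 H)
    (hm : HasMarkedEdge P H) (S : SimpleGraph V) :
    Disjoint H.edgeSet (trimStar P C S).edgeSet :=
  Set.disjoint_left.mpr fun _ he hS => (mem_edgeSet_trimStar.mp hS).2.1 ⟨H, hH, hc4, hm, he⟩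

theorem isBiclique_of_mem_normalizeCover {G H' : SimpleGraph V}
    (hC : ∀ H ∈ C, IsBiclique G H) (hH' : H' ∈ normalizeCover P C) : IsBiclique G H' := by
  obtain ⟨H, hH, rfl⟩ := mem_normalizeCover.mp hH'
  exact isBiclique_normalizeBiclique (hC H hH)

theorem disjoint_of_isMarkedStar_mem_normalizeCover {H₁ H₂ : SimpleGraph V}
    (h₁ : H₁ ∈ normalizeCover P C) (h₂ : H₂ ∈ normalizeCover P C) (hne : H₁ ≠ H₂)
    (hs₁ : IsMarkedStar P H₁) (hs₂ : IsMarkedStar P H₂) :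
    Disjoint H₁.edgeSet H₂.edgeSet := by
  obtain ⟨S₁, -, rfl⟩ := mem_normalizeCover.mp h₁
  obtain ⟨S₂, -, rfl⟩ := mem_normalizeCover.mp h₂
  rw [normalizeBiclique_eq_trimStar hs₁, normalizeBiclique_eq_trimStar hs₂] at hne ⊢
  exact disjoint_trimStar hne

theorem disjoint_of_isC4_mem_normalizeCover {H₁ H₂ : SimpleGraph V}
    (h₁ : H₁ ∈ normalizeCover P C) (hc4 : IsC4 H₁) (hm : HasMarkedEdge P H₁)
    (h₂ : H₂ ∈ normalizeCover P C) (hs₂ : IsMarkedStar P H₂) :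
    Disjoint H₁.edgeSet H₂.edgeSet := by
  obtain ⟨H, hH, rfl⟩ := mem_normalizeCover.mp h₁
  obtain ⟨S, -, rfl⟩ := mem_normalizeCover.mp h₂
  have hself := normalizeBiclique_eq_self_of_isC4 hc4
  rw [hself] at hc4 hm ⊢
  rw [normalizeBiclique_eq_trimStar hs₂]
  exact disjoint_trimStar_of_isC4 hH hc4 hm S

end Normalize

theorem cover_normalization_general (p q : ℕ)
    (C : Finset (SimpleGraph (Fin q × Fin p)))
    (hC : ∀ H ∈ C, IsBiclique (gridGraph p q) H)
    (hcov : ∀ e ∈ (gridGraph p q).edgeSet, ∃ H ∈ C, e ∈ H.edgeSet) :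
    ∃ C' : Finset (SimpleGraph (Fin q × Fin p)),
      (∀ H ∈ C', IsBiclique (gridGraph p q) H) ∧
      (∀ e ∈ (gridGraph p q).edgeSet, ∃ H ∈ C', e ∈ H.edgeSet) ∧
      C'.card ≤ C.card ∧
      (∀ H₁ ∈ C', ∀ H₂ ∈ C', H₁ ≠ H₂ →
        IsStar H₁ → (∃ e ∈ H₁.edgeSet, OuterEdge p q e) →
        IsStar H₂ → (∃ e ∈ H₂.edgeSet, OuterEdge p q e) →
        Disjoint H₁.edgeSet H₂.edgeSet) ∧
      (∀ H₁ ∈ C', ∀ H₂ ∈ C',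
        IsC4 H₁ → (∃ e ∈ H₁.edgeSet, OuterEdge p q e) →
        IsStar H₂ → (∃ e ∈ H₂.edgeSet, OuterEdge p q e) →
        Disjoint H₁.edgeSet H₂.edgeSet) := by
  refine ⟨normalizeCover (OuterEdge p q) C, fun _ hH => isBiclique_of_mem_normalizeCover hC hH,
    fun e he => ?_, card_normalizeCover_le,
    fun _ h₁ _ h₂ hne hs₁ hm₁ hs₂ hm₂ =>
      disjoint_of_isMarkedStar_mem_normalizeCover h₁ h₂ hne ⟨hs₁, hm₁⟩
        ⟨hs₂, hm₂⟩,
    fun _ h₁ _ h₂ hc4 hm₁ hs₂ hm₂ =>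
      disjoint_of_isC4_mem_normalizeCover h₁ hc4 hm₁ h₂ ⟨hs₂, hm₂⟩⟩
  obtain ⟨H, hH, heH⟩ := hcov e he
  exact exists_mem_normalizeCover hH heH

theorem cover_normalization (p q : ℕ) (hp : 2 ≤ p) (hpq : p ≤ q)
    (C : Finset (SimpleGraph (Fin q × Fin p)))
    (hC : ∀ H ∈ C, IsBiclique (gridGraph p q) H)
    (hcov : ∀ e ∈ (gridGraph p q).edgeSet, ∃ H ∈ C, e ∈ H.edgeSet) :
    ∃ C' : Finset (SimpleGraph (Fin q × Fin p)),
      (∀ H ∈ C', IsBiclique (gridGraph p q) H) ∧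
      (∀ e ∈ (gridGraph p q).edgeSet, ∃ H ∈ C', e ∈ H.edgeSet) ∧
      C'.card ≤ C.card ∧
      (∀ H₁ ∈ C', ∀ H₂ ∈ C', H₁ ≠ H₂ →
        IsStar H₁ → (∃ e ∈ H₁.edgeSet, OuterEdge p q e) →
        IsStar H₂ → (∃ e ∈ H₂.edgeSet, OuterEdge p q e) →
        Disjoint H₁.edgeSet H₂.edgeSet) ∧
      (∀ H₁ ∈ C', ∀ H₂ ∈ C',
        IsC4 H₁ → (∃ e ∈ H₁.edgeSet, OuterEdge p q e) →
        IsStar H₂ → (∃ e ∈ H₂.edgeSet, OuterEdge p q e) →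
        Disjoint H₁.edgeSet H₂.edgeSet) :=
  cover_normalization_general p q C hC hcov
end

section
/- For every integer q ≥ 2, the biclique covering number of the grid graph G_{2,q} equals q − 1. -/
/-!
The `q - 1` unit squares on consecutive pairs of columns are 4-cycles, i.e. copies of `K_{2,2}`,
and together they cover every edge of `G_{2,q}`.

Conversely, two edges `uv`, `u'v'` of a biclique are always joined either crosswise (`uv'`, `u'v`)
or in parallel (`uu'`, `vv'`) by edges of the graph. In the grid this forces two horizontal edges
of one biclique to be consecutive in a row or stacked in the same column, so a biclique contains
at most two of the `2(q - 1)` horizontal edges.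
-/

variable {V : Type*}

namespace IsBiclique

variable {G H : SimpleGraph V}

theorem adj_cross (hH : IsBiclique G H) {u v u' v' : V} (h : H.Adj u v) (h' : H.Adj u' v') :
    (H.Adj u v' ∧ H.Adj u' v) ∨ (H.Adj u u' ∧ H.Adj v v') := by
  obtain ⟨-, A, B, hAB⟩ := hH
  simp only [hAB] at h h' ⊢
  tauto

end IsBiclique

theorem isBiclique_fromRel {G : SimpleGraph V} {A B : Set V} (hAB : Disjoint A B)
    (hG : ∀ v ∈ A, ∀ w ∈ B, G.Adj v w) :
    IsBiclique G (SimpleGraph.fromRel fun v w => v ∈ A ∧ w ∈ B) := by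
  refine ⟨fun v w h => ?_, A, B, fun v w => ?_⟩
  · obtain ⟨-, ⟨hv, hw⟩ | ⟨hw, hv⟩⟩ := (SimpleGraph.fromRel_adj _ v w).1 h
    · exact hG v hv w hw
    · exact (hG w hw v hv).symm
  · have hne {x y : V} (hx : x ∈ A) (hy : y ∈ B) : x ≠ y := hAB.ne_of_mem hx hy
    rw [SimpleGraph.fromRel_adj]
    grind

def IsBicliqueCover {n : ℕ} (G : SimpleGraph V) (H : Fin n → SimpleGraph V) : Prop :=
  (∀ i, IsBiclique G (H i)) ∧ ∀ e ∈ G.edgeSet, ∃ i, e ∈ (H i).edgeSet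

theorem bcn_eq_of_isBicliqueCover {G : SimpleGraph V} {n : ℕ} (H : Fin n → SimpleGraph V)
    (hH : IsBicliqueCover G H)
    (hmin : ∀ k (H' : Fin k → SimpleGraph V), IsBicliqueCover G H' → n ≤ k) :
    bcn G = n :=
  le_antisymm (Nat.sInf_le ⟨H, hH⟩) (le_csInf ⟨n, H, hH⟩ fun k ⟨H', hH'⟩ => hmin k H' hH')

section Grid

variable {p q m : ℕ}

theorem gridGraph_adj {v w : Fin q × Fin p} :
    (gridGraph p q).Adj v w ↔ Nat.dist v.1 w.1 + Nat.dist v.2 w.2 = 1 := Iff.rfl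

def gridSquareSide (k r : ℕ) : Set (Fin q × Fin 2) :=
  {v | ((v.1 : ℕ) = k ∨ (v.1 : ℕ) = k + 1) ∧ ((v.1 : ℕ) + v.2) % 2 = r}

def gridSquare (k : ℕ) : SimpleGraph (Fin q × Fin 2) :=
  SimpleGraph.fromRel fun v w => v ∈ gridSquareSide k 0 ∧ w ∈ gridSquareSide k 1

theorem isBiclique_gridSquare (k : ℕ) : IsBiclique (gridGraph 2 q) (gridSquare k) := by
  refine isBiclique_fromRel (Set.disjoint_left.2 fun v h₀ h₁ => ?_) fun v hv w hw => ?_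
  · simp only [gridSquareSide, Set.mem_ofPred_eq] at h₀ h₁
    omega
  · simp only [gridSquareSide, Set.mem_ofPred_eq] at hv hw
    have := v.2.isLt
    have := w.2.isLt
    simp only [gridGraph_adj, Nat.dist]
    omega

theorem exists_gridSquare_adj (hm : m ≠ 0) {v w : Fin (m + 1) × Fin 2}
    (h : (gridGraph 2 (m + 1)).Adj v w) : ∃ k : Fin m, (gridSquare k).Adj v w := by
  refine ⟨⟨min (min v.1 w.1) (m - 1), by omega⟩, ?_⟩
  rw [gridSquare, SimpleGraph.fromRel_adj]
  refine ⟨h.ne, ?_⟩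
  simp only [gridSquareSide, Set.mem_ofPred_eq]
  have := v.1.isLt
  have := w.1.isLt
  have := v.2.isLt
  have := w.2.isLt
  rw [gridGraph_adj, Nat.dist, Nat.dist] at h
  omega

theorem isBicliqueCover_gridSquare (hm : m ≠ 0) :
    IsBicliqueCover (gridGraph 2 (m + 1)) fun k : Fin m => gridSquare k := by
  refine ⟨fun k => isBiclique_gridSquare k, fun e he => ?_⟩
  induction e using Sym2.ind with
  | _ v w => exact exists_gridSquare_adj hm he

def horizontalEdge (x : Fin m × Fin p) : Sym2 (Fin (m + 1) × Fin p) :=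
  s((x.1.castSucc, x.2), (x.1.succ, x.2))

theorem horizontalEdge_mem_edgeSet (x : Fin m × Fin p) :
    horizontalEdge x ∈ (gridGraph p (m + 1)).edgeSet := by
  simp [horizontalEdge, gridGraph_adj, Nat.dist]

theorem IsBiclique.horizontalEdges_near {H : SimpleGraph (Fin (m + 1) × Fin 2)}
    (hH : IsBiclique (gridGraph 2 (m + 1)) H) {x y : Fin m × Fin 2}
    (hx : horizontalEdge x ∈ H.edgeSet) (hy : horizontalEdge y ∈ H.edgeSet) :
    Nat.dist x.1 y.1 ≤ 1 ∧ (x.2 ≠ y.2 → x.1 = y.1) := by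
  have := x.2.isLt
  have := y.2.isLt
  rcases hH.adj_cross hx hy with ⟨h₁, h₂⟩ | ⟨h₁, h₂⟩ <;>
  · have h₁ := gridGraph_adj.1 (hH.1 h₁)
    have h₂ := gridGraph_adj.1 (hH.1 h₂)
    simp only [Fin.val_castSucc, Fin.val_succ, Nat.dist, Ne, Fin.ext_iff] at h₁ h₂ ⊢
    omega

theorem IsBiclique.card_le_two_of_horizontalEdge_mem {H : SimpleGraph (Fin (m + 1) × Fin 2)}
    (hH : IsBiclique (gridGraph 2 (m + 1)) H) {s : Finset (Fin m × Fin 2)}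
    (hs : ∀ x ∈ s, horizontalEdge x ∈ H.edgeSet) : s.card ≤ 2 := by
  by_contra! h
  obtain ⟨x, hx, y, hy, z, hz, hxy, hxz, hyz⟩ := Finset.two_lt_card.1 h
  have hxy' := hH.horizontalEdges_near (hs x hx) (hs y hy)
  have hxz' := hH.horizontalEdges_near (hs x hx) (hs z hz)
  have hyz' := hH.horizontalEdges_near (hs y hy) (hs z hz)
  rw [Ne, Prod.ext_iff, Fin.ext_iff, Fin.ext_iff] at hxy hxz hyz
  simp only [Ne, Fin.ext_iff, Nat.dist] at hxy' hxz' hyz'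
  have := x.2.isLt
  have := y.2.isLt
  have := z.2.isLt
  omega

theorem IsBicliqueCover.le_of_gridGraph {n : ℕ} {H : Fin n → SimpleGraph (Fin (m + 1) × Fin 2)}
    (hH : IsBicliqueCover (gridGraph 2 (m + 1)) H) : m ≤ n := by
  choose g hg using fun x => hH.2 _ (horizontalEdge_mem_edgeSet (p := 2) (m := m) x)
  have := Finset.card_le_mul_card_image_of_maps_to (f := g) (s := Finset.univ) (t := Finset.univ)
    (fun _ _ => Finset.mem_univ _) 2 fun k _ =>
      (hH.1 k).card_le_two_of_horizontalEdge_mem fun x hx => (Finset.mem_filter.1 hx).2 ▸ hg x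
  simp only [Finset.card_univ, Fintype.card_prod, Fintype.card_fin] at this
  omega

end Grid

theorem bc_grid_two_rows (q : ℕ) (hq : 2 ≤ q) :
    bcn (gridGraph 2 q) = q - 1 := by
  obtain ⟨m, rfl⟩ : ∃ m, q = m + 1 := ⟨q - 1, by omega⟩
  rw [Nat.add_sub_cancel]
  exact bcn_eq_of_isBicliqueCover _ (isBicliqueCover_gridSquare (by omega))
    fun _ _ => IsBicliqueCover.le_of_gridGraph
end
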